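/- arXiv:1408.5266 — 3 statements merged into one kernel-verified Lean document; each statement's English description precedes it below -/
import Mathlib

section
/- The integral operator A defined by (Aφ)(t,s,i,y) = ((1−F(T−t+y|i))/(1−F(y|i))) η_i(t,s) + ∫₀^{T−t} e^{−r(i)v} (f(y+v|i)/(1−F(y|i))) Σ_j p_{ij} ∫₀^∞ φ(t+v,x,j,0) α(x;s,i,v) dx dv is a contraction on B with respect to the weighted sup norm ‖·‖: there exists a constant 0 ≤ L < 1, namely L = sup_D ∫₀^{T−t} e^{−r(i)v} (f(y+v|i)/(1−F(y|i))) (1 + s e^{r(i)v})/(1+s) dv, such that ‖Aφ₁ − Aφ₂‖ ≤ L ‖φ₁ − φ₂‖ for all φ₁, φ₂ ∈ B. -/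
open MeasureTheory Real Set Finset

/-- Standard normal cumulative distribution function. -/
noncomputable def stdNormalCDF (x : ℝ) : ℝ :=
  ∫ u in Set.Iic x, Real.exp (-u ^ 2 / 2) / Real.sqrt (2 * Real.pi)

/-- Black–Scholes price of a European call with rate `r`, volatility `σ`,
strike `K`, maturity `T`, evaluated at time `t` and stock price `s`;
with `η(t,0)=0` and `η(T,s)=(s-K)⁺`. -/
noncomputable def bsPrice (r σ K T t s : ℝ) : ℝ :=
  if s ≤ 0 then 0
  else if t < T then
    s * stdNormalCDF ((Real.log (s / K) + (r + σ ^ 2 / 2) * (T - t)) / (σ * Real.sqrt (T - t)))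
      - K * Real.exp (-r * (T - t)) *
        stdNormalCDF ((Real.log (s / K) + (r + σ ^ 2 / 2) * (T - t)) / (σ * Real.sqrt (T - t))
          - σ * Real.sqrt (T - t))
  else max (s - K) 0

/-- `L(x,s,i,v)` of the lognormal kernel. -/
noncomputable def lnL (r σ x s v : ℝ) : ℝ :=
  (Real.log (x / s) - (r - σ ^ 2 / 2) * v) / (σ * Real.sqrt v)

/-- The lognormal kernel `α(x; s, i, v)`. -/
noncomputable def lnKernel (r σ x s v : ℝ) : ℝ :=
  Real.exp (-(lnL r σ x s v) ^ 2 / 2) / (Real.sqrt (2 * Real.pi) * x * σ * Real.sqrt v)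

/-- The domain `D` (in the variables `(t, s, y)`, the regime being kept separate). -/
def domD (T : ℝ) : Set (ℝ × ℝ × ℝ) :=
  {q | 0 < q.1 ∧ q.1 < T ∧ 0 < q.2.1 ∧ 0 < q.2.2 ∧ q.2.2 < q.1}

/-- The closure of the domain `D`. -/
def domDbar (T : ℝ) : Set (ℝ × ℝ × ℝ) :=
  {q | 0 ≤ q.1 ∧ q.1 ≤ T ∧ 0 ≤ q.2.1 ∧ 0 ≤ q.2.2 ∧ q.2.2 ≤ q.1}

/-- The right hand side of the Volterra integral equation. -/
noncomputable def ieRHS {k : ℕ} (r σ : Fin k → ℝ) (p : Fin k → Fin k → ℝ)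
    (f F : Fin k → ℝ → ℝ) (K T : ℝ) (φ : ℝ → ℝ → Fin k → ℝ → ℝ)
    (t s : ℝ) (i : Fin k) (y : ℝ) : ℝ :=
  (1 - F i (T - t + y)) / (1 - F i y) * bsPrice (r i) (σ i) K T t s
    + ∫ v in Set.Ioo (0 : ℝ) (T - t),
        Real.exp (-(r i) * v) * (f i (y + v) / (1 - F i y)) *
          ∑ j, p i j * ∫ x in Set.Ioi (0 : ℝ), φ (t + v) x j 0 * lnKernel (r i) (σ i) x s v

/-- Continuity on the closure of `D`. -/
def ContOnClosure (T : ℝ) {k : ℕ} (φ : ℝ → ℝ → Fin k → ℝ → ℝ) : Prop :=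
  ∀ i, ContinuousOn (fun q : ℝ × ℝ × ℝ => φ q.1 q.2.1 i q.2.2) (domDbar T)

/-- At most linear growth in the stock variable: `sup_D |φ|/(1+s) < ∞`. -/
def LinGrowth (T : ℝ) {k : ℕ} (φ : ℝ → ℝ → Fin k → ℝ → ℝ) : Prop :=
  ∃ C : ℝ, ∀ t s y : ℝ, (t, s, y) ∈ domD T → ∀ i, |φ t s i y| ≤ C * (1 + s)

/-- `φ` solves the Volterra integral equation together with boundary condition
`φ(t,0,i,y) = 0`. -/
def SolvesIE {k : ℕ} (r σ : Fin k → ℝ) (p : Fin k → Fin k → ℝ)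
    (f F : Fin k → ℝ → ℝ) (K T : ℝ) (φ : ℝ → ℝ → Fin k → ℝ → ℝ) : Prop :=
  (∀ t s y : ℝ, (t, s, y) ∈ domD T → ∀ i,
      φ t s i y = ieRHS r σ p f F K T φ t s i y) ∧
  (∀ t y : ℝ, ∀ i, 0 ≤ t → t ≤ T → 0 ≤ y → y ≤ t → φ t 0 i y = 0)

/-- Membership in the set `B` of non-negative continuous functions on the closure
of `D` vanishing at `s = 0` with finite weighted sup norm. -/
def memB (T : ℝ) {k : ℕ} (φ : ℝ → ℝ → Fin k → ℝ → ℝ) : Prop :=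
  ContOnClosure T φ ∧
  (∀ t s y : ℝ, (t, s, y) ∈ domDbar T → ∀ i, 0 ≤ φ t s i y) ∧
  (∀ t y : ℝ, ∀ i, 0 ≤ t → t ≤ T → 0 ≤ y → y ≤ t → φ t 0 i y = 0) ∧
  LinGrowth T φ

/-- The weighted sup norm over `D`. -/
noncomputable def wnorm (T : ℝ) {k : ℕ} (φ : ℝ → ℝ → Fin k → ℝ → ℝ) : ℝ :=
  sSup {x : ℝ | ∃ t s y : ℝ, ∃ i : Fin k, (t, s, y) ∈ domD T ∧ x = |φ t s i y| / (1 + s)}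

/-- The contraction constant `L`. -/
noncomputable def Lconst {k : ℕ} (r : Fin k → ℝ) (f F : Fin k → ℝ → ℝ) (T : ℝ) : ℝ :=
  sSup {x : ℝ | ∃ t s y : ℝ, ∃ i : Fin k, (t, s, y) ∈ domD T ∧
    x = ∫ v in Set.Ioo (0 : ℝ) (T - t),
      Real.exp (-(r i) * v) * (f i (y + v) / (1 - F i y)) *
        ((1 + s * Real.exp (r i * v)) / (1 + s))}

/-!
After the substitution `x = exp u` the lognormal kernel `α(·; s, i, v)` becomes the Gaussian
density with mean `log s + (r - σ²/2) v` and variance `σ² v`, so it has total mass `1` and first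
moment `s e^{r v}`. Hence it averages a function bounded by `C (1 + x)` to at most
`C (1 + s e^{r v})`, and since the rows of `p` are probability vectors, the integrand of
`Aφ₁ - Aφ₂` (the Black–Scholes terms cancel) is bounded by `‖φ₁ - φ₂‖ (1 + s)` times the integrand
defining `L`. For `r ≥ 0` one has `e^{-r v} (1 + s e^{r v}) / (1 + s) ≤ 1`, so every integral in
the supremum defining `L` is at most `(F(y + T - t) - F(y)) / (1 - F(y)) ≤ F(T)`, whence
`L ≤ maxᵢ F(T|i) < 1`.
-/

open ProbabilityTheory Filter Topology

section ExpMoment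

variable {P : Measure ℝ} {g : ℝ → ℝ} {C : ℝ}

lemma integrable_linear_exp [IsFiniteMeasure P] (hexp : Integrable exp P) :
    Integrable (fun u => C * (1 + exp u)) P :=
  ((integrable_const 1).add hexp).const_mul C

lemma integrable_comp_exp_of_abs_le [IsFiniteMeasure P] (hexp : Integrable exp P)
    (hg : ContinuousOn g (Set.Ioi 0)) (hbd : ∀ x, 0 < x → |g x| ≤ C * (1 + x)) :
    Integrable (fun u => g (exp u)) P :=
  (integrable_linear_exp hexp).mono'
    (hg.comp_continuous continuous_exp exp_pos).aestronglyMeasurable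
    (ae_of_all _ fun u => hbd _ (exp_pos u))

lemma abs_integral_comp_exp_le [IsProbabilityMeasure P] (hexp : Integrable exp P)
    (hbd : ∀ x, 0 < x → |g x| ≤ C * (1 + x)) :
    |∫ u, g (exp u) ∂P| ≤ C * (1 + ∫ u, exp u ∂P) :=
  calc |∫ u, g (exp u) ∂P| = ‖∫ u, g (exp u) ∂P‖ := (Real.norm_eq_abs _).symm
    _ ≤ ∫ u, C * (1 + exp u) ∂P :=
        norm_integral_le_of_norm_le (integrable_linear_exp hexp)
          (ae_of_all _ fun u => hbd _ (exp_pos u))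
    _ = C * (1 + ∫ u, exp u ∂P) := by
        rw [integral_const_mul, integral_add (integrable_const 1) hexp, integral_const,
          probReal_univ, one_smul]

end ExpMoment

lemma exists_lt_forall_le_of_forall_lt {ι α : Type*} [Finite ι] [LinearOrder α] [NoMinOrder α]
    {a : ι → α} {b : α} (h : ∀ i, a i < b) : ∃ c < b, ∀ i, a i ≤ c := by
  cases isEmpty_or_nonempty ι
  · obtain ⟨c, hc⟩ := exists_lt b
    exact ⟨c, hc, isEmptyElim⟩
  · obtain ⟨i₀, hi₀⟩ := Finite.exists_max a
    exact ⟨a i₀, h i₀, hi₀⟩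

lemma abs_sum_mul_le_of_sum_eq_one {ι : Type*} [Fintype ι] {p a : ι → ℝ} {B : ℝ}
    (hp0 : ∀ j, 0 ≤ p j) (hp1 : ∑ j, p j = 1) (ha : ∀ j, |a j| ≤ B) :
    |∑ j, p j * a j| ≤ B :=
  calc |∑ j, p j * a j| ≤ ∑ j, |p j * a j| := abs_sum_le_sum_abs _ _
    _ ≤ ∑ j, p j * B := sum_le_sum fun j _ => by
        rw [abs_mul, abs_of_nonneg (hp0 j)]
        exact mul_le_mul_of_nonneg_left (ha j) (hp0 j)
    _ = B := by rw [← sum_mul, hp1, one_mul]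

section LogNormal

variable {r σ s v : ℝ}

/-- The law of `log S_v` for the geometric Brownian motion `dS = r S dt + σ S dW` with `S_0 = s`. -/
noncomputable abbrev logPriceLaw (r σ s v : ℝ) : Measure ℝ :=
  gaussianReal (Real.log s + (r - σ ^ 2 / 2) * v) (σ ^ 2 * v).toNNReal

lemma exp_mul_lnKernel_exp (hσ : 0 < σ) (hs : 0 < s) (hv : 0 < v) (u : ℝ) :
    exp u * lnKernel r σ (exp u) s v =
      gaussianPDFReal (Real.log s + (r - σ ^ 2 / 2) * v) (σ ^ 2 * v).toNNReal u := by
  obtain ⟨w, hw, rfl⟩ : ∃ w, 0 < w ∧ v = w ^ 2 :=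
    ⟨√v, Real.sqrt_pos.2 hv, (sq_sqrt hv.le).symm⟩
  have hπ : 0 < √(2 * π) := Real.sqrt_pos.2 (by positivity)
  rw [gaussianPDFReal_def, Real.coe_toNNReal _ (by positivity), lnKernel, lnL,
    Real.log_div (exp_pos u).ne' hs.ne', Real.log_exp, Real.sqrt_sq hw.le,
    Real.sqrt_mul (by positivity : (0 : ℝ) ≤ 2 * π) (σ ^ 2 * w ^ 2), ← mul_pow,
    Real.sqrt_sq (by positivity)]
  field_simp
  congr 2
  field_simp
  ring

lemma setIntegral_Ioi_mul_lnKernel (hσ : 0 < σ) (hs : 0 < s) (hv : 0 < v) (g : ℝ → ℝ) :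
    ∫ x in Ioi 0, g x * lnKernel r σ x s v = ∫ u, g (exp u) ∂logPriceLaw r σ s v := by
  rw [← Real.range_exp, ← image_univ,
    integral_image_eq_integral_abs_deriv_smul MeasurableSet.univ
      (fun x _ => (hasDerivAt_exp x).hasDerivWithinAt) exp_injective.injOn, setIntegral_univ,
    logPriceLaw, integral_gaussianReal_eq_integral_smul (by simpa using by positivity)]
  congr 1 with u
  rw [abs_of_pos (exp_pos u), smul_eq_mul, smul_eq_mul, ← exp_mul_lnKernel_exp hσ hs hv]
  ring

lemma integral_exp_logPriceLaw (hs : 0 < s) (hv : 0 ≤ v) :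
    ∫ u, exp u ∂logPriceLaw r σ s v = s * exp (r * v) := by
  have h := congrFun (mgf_id_gaussianReal (μ := Real.log s + (r - σ ^ 2 / 2) * v)
    (v := (σ ^ 2 * v).toNNReal)) 1
  simp only [mgf, id, one_mul, mul_one, one_pow] at h
  rw [logPriceLaw, h, Real.coe_toNNReal _ (by positivity),
    show Real.log s + (r - σ ^ 2 / 2) * v + σ ^ 2 * v / 2 = Real.log s + r * v by ring,
    exp_add, exp_log hs]

lemma integrable_exp_logPriceLaw : Integrable exp (logPriceLaw r σ s v) := by
  simpa using integrable_exp_mul_gaussianReal 1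

end LogNormal

section KernelBounds

variable {r σ s v C C₁ C₂ : ℝ} {g g₁ g₂ : ℝ → ℝ}

lemma abs_setIntegral_mul_lnKernel_le (hσ : 0 < σ) (hs : 0 < s) (hv : 0 < v)
    (hbd : ∀ x, 0 < x → |g x| ≤ C * (1 + x)) :
    |∫ x in Set.Ioi 0, g x * lnKernel r σ x s v| ≤ C * (1 + s * exp (r * v)) := by
  rw [setIntegral_Ioi_mul_lnKernel hσ hs hv, ← integral_exp_logPriceLaw hs hv.le]
  exact abs_integral_comp_exp_le integrable_exp_logPriceLaw hbd

lemma setIntegral_sub_mul_lnKernel (hσ : 0 < σ) (hs : 0 < s) (hv : 0 < v)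
    (hg₁ : ContinuousOn g₁ (Set.Ioi 0)) (hbd₁ : ∀ x, 0 < x → |g₁ x| ≤ C₁ * (1 + x))
    (hg₂ : ContinuousOn g₂ (Set.Ioi 0)) (hbd₂ : ∀ x, 0 < x → |g₂ x| ≤ C₂ * (1 + x)) :
    ∫ x in Set.Ioi 0, (g₁ x - g₂ x) * lnKernel r σ x s v =
      (∫ x in Set.Ioi 0, g₁ x * lnKernel r σ x s v) -
        ∫ x in Set.Ioi 0, g₂ x * lnKernel r σ x s v := by
  simp only [setIntegral_Ioi_mul_lnKernel hσ hs hv]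
  exact integral_sub (integrable_comp_exp_of_abs_le integrable_exp_logPriceLaw hg₁ hbd₁)
    (integrable_comp_exp_of_abs_le integrable_exp_logPriceLaw hg₂ hbd₂)

lemma continuousOn_lnKernel_uncurry (hσ : 0 < σ) (hs : 0 < s) :
    ContinuousOn (fun q : ℝ × ℝ => lnKernel r σ q.2 s q.1) (Set.Ioi 0 ×ˢ Set.Ioi 0) := by
  unfold lnKernel lnL
  fun_prop (disch :=
    (rintro q ⟨h₁ : 0 < q.1, h₂ : 0 < q.2⟩; first | positivity | exact (div_pos h₂ hs).ne'))

end KernelBounds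

section WeightedNorm

variable {T C M t s : ℝ} {k : ℕ} {φ ψ : ℝ → ℝ → Fin k → ℝ → ℝ}

def LinGrowthWith (T C : ℝ) (φ : ℝ → ℝ → Fin k → ℝ → ℝ) : Prop :=
  ∀ t s y, (t, s, y) ∈ domD T → ∀ i, |φ t s i y| ≤ C * (1 + s)

lemma ContOnClosure.sub (hφ : ContOnClosure T φ) (hψ : ContOnClosure T ψ) :
    ContOnClosure T (fun t s i y => φ t s i y - ψ t s i y) :=
  fun i => (hφ i).sub (hψ i)

lemma LinGrowth.sub (hφ : LinGrowth T φ) (hψ : LinGrowth T ψ) :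
    LinGrowth T (fun t s i y => φ t s i y - ψ t s i y) := by
  obtain ⟨C₁, h₁⟩ := hφ
  obtain ⟨C₂, h₂⟩ := hψ
  refine ⟨C₁ + C₂, fun t s y hq i => ?_⟩
  linarith [abs_sub (φ t s i y) (ψ t s i y), h₁ t s y hq i, h₂ t s y hq i]

lemma ContOnClosure.continuousOn_slice (hφ : ContOnClosure T φ) (ht : 0 ≤ t) (htT : t ≤ T)
    (j : Fin k) : ContinuousOn (fun x => φ t x j 0) (Set.Ioi 0) :=
  (hφ j).comp (f := fun x => (t, x, 0)) (by fun_prop) fun _ hx =>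
    ⟨ht, htT, le_of_lt hx, le_rfl, ht⟩

lemma ContOnClosure.abs_slice_le (hφ : ContOnClosure T φ) (hC : LinGrowthWith T C φ)
    (ht : 0 < t) (htT : t < T) (hs : 0 < s) (i : Fin k) :
    |φ t s i 0| ≤ C * (1 + s) := by
  have hy : Tendsto (fun y : ℝ => ((t, s, y) : ℝ × ℝ × ℝ)) (𝓝[>] 0)
      (𝓝[domDbar T] (t, s, 0)) := by
    refine tendsto_nhdsWithin_of_tendsto_nhds_of_eventually_within _
      ((Continuous.tendsto (by fun_prop) 0).mono_left nhdsWithin_le_nhds) ?_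
    filter_upwards [Ioo_mem_nhdsGT ht] with y hy
    exact ⟨ht.le, htT.le, hs.le, hy.1.le, hy.2.le⟩
  refine le_of_tendsto (((hφ i (t, s, 0) ⟨ht.le, htT.le, hs.le, le_rfl, ht.le⟩).tendsto.comp
    hy).abs) ?_
  filter_upwards [Ioo_mem_nhdsGT ht] with y hy
  exact hC t s y ⟨ht, htT, hs, hy.1, hy.2⟩ i

lemma wnorm_nonneg : 0 ≤ wnorm T φ :=
  Real.sSup_nonneg <| by
    rintro _ ⟨t, s, y, i, ⟨-, -, hs, -⟩, rfl⟩
    positivity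

lemma LinGrowth.linGrowthWith_wnorm (hφ : LinGrowth T φ) : LinGrowthWith T (wnorm T φ) φ := by
  obtain ⟨C, hC⟩ := hφ
  intro t s y hq i
  rw [← div_le_iff₀ (by linarith [hq.2.2.1])]
  refine le_csSup ⟨C, ?_⟩ ⟨t, s, y, i, hq, rfl⟩
  rintro _ ⟨t, s, y, i, hq, rfl⟩
  exact (div_le_iff₀ (by linarith [hq.2.2.1])).2 (hC t s y hq i)

lemma wnorm_le (hM : 0 ≤ M) (h : LinGrowthWith T M φ) : wnorm T φ ≤ M := by
  refine Real.sSup_le ?_ hM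
  rintro _ ⟨t, s, y, i, hq, rfl⟩
  exact (div_le_iff₀ (by linarith [hq.2.2.1])).2 (h t s y hq i)

end WeightedNorm

section CDF

variable {f F : ℝ → ℝ} {a b y w : ℝ}

lemma ContinuousOn.comp_const_add_Ici (hf : ContinuousOn f (Set.Ici 0)) (hy : 0 ≤ y) :
    ContinuousOn (fun v => f (y + v)) (Set.Ici 0) :=
  hf.comp (by fun_prop) fun v (hv : 0 ≤ v) => show 0 ≤ y + v by linarith

lemma sub_eq_intervalIntegral_of_eq_integral (hf : ContinuousOn f (Set.Ici 0))
    (hF : ∀ y, F y = ∫ u in (0 : ℝ)..y, f u) (ha : 0 ≤ a) (hb : 0 ≤ b) :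
    F b - F a = ∫ u in a..b, f u := by
  have hint : ∀ c, 0 ≤ c → IntervalIntegrable f volume 0 c := fun c hc =>
    (hf.mono (by rw [uIcc_of_le hc]; exact Icc_subset_Ici_self)).intervalIntegrable
  rw [hF, hF, intervalIntegral.integral_interval_sub_left (hint b hb) (hint a ha)]

lemma monotoneOn_of_eq_integral (hf : ContinuousOn f (Set.Ici 0))
    (hfnn : ∀ y, 0 ≤ y → 0 ≤ f y) (hF : ∀ y, F y = ∫ u in (0 : ℝ)..y, f u) :
    MonotoneOn F (Set.Ici 0) := fun a (ha : 0 ≤ a) b hb hab => by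
  rw [← sub_nonneg, sub_eq_intervalIntegral_of_eq_integral hf hF ha hb]
  exact intervalIntegral.integral_nonneg hab fun u hu => hfnn u (ha.trans hu.1)

lemma setIntegral_Ioo_comp_const_add (hf : ContinuousOn f (Set.Ici 0))
    (hF : ∀ y, F y = ∫ u in (0 : ℝ)..y, f u) (hy : 0 ≤ y) (hw : 0 ≤ w) :
    ∫ v in Set.Ioo 0 w, f (y + v) = F (y + w) - F y := by
  have hshift := intervalIntegral.integral_comp_add_left f y (a := 0) (b := w)
  rw [add_zero] at hshift
  rw [sub_eq_intervalIntegral_of_eq_integral hf hF hy (by linarith), ← hshift,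
    intervalIntegral.integral_of_le hw, integral_Ioc_eq_integral_Ioo]

end CDF

section Integrands

variable {k : ℕ} {r σ : Fin k → ℝ} {p : Fin k → Fin k → ℝ} {f F : Fin k → ℝ → ℝ}
  {φ φ₁ φ₂ : ℝ → ℝ → Fin k → ℝ → ℝ} {K T t s y v C C₁ C₂ : ℝ} {i : Fin k}

noncomputable def ieIntegrand (r σ : Fin k → ℝ) (p : Fin k → Fin k → ℝ)
    (f F : Fin k → ℝ → ℝ) (φ : ℝ → ℝ → Fin k → ℝ → ℝ) (t s : ℝ) (i : Fin k) (y v : ℝ) : ℝ :=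
  exp (-(r i) * v) * (f i (y + v) / (1 - F i y)) *
    ∑ j, p i j * ∫ x in Set.Ioi 0, φ (t + v) x j 0 * lnKernel (r i) (σ i) x s v

noncomputable def contractionIntegrand (r : Fin k → ℝ) (f F : Fin k → ℝ → ℝ) (s : ℝ)
    (i : Fin k) (y v : ℝ) : ℝ :=
  exp (-(r i) * v) * (f i (y + v) / (1 - F i y)) * ((1 + s * exp (r i * v)) / (1 + s))

lemma ieRHS_sub_ieRHS :
    ieRHS r σ p f F K T φ₁ t s i y - ieRHS r σ p f F K T φ₂ t s i y =
      (∫ v in Set.Ioo 0 (T - t), ieIntegrand r σ p f F φ₁ t s i y v) -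
        ∫ v in Set.Ioo 0 (T - t), ieIntegrand r σ p f F φ₂ t s i y v :=
  add_sub_add_left_eq_sub _ _ _

lemma abs_ieIntegrand_le (hσ : 0 < σ i) (hp0 : ∀ j, 0 ≤ p i j) (hp1 : ∑ j, p i j = 1)
    (hw : 0 ≤ f i (y + v) / (1 - F i y)) (hs : 0 < s) (hv : 0 < v)
    (hbd : ∀ j x, 0 < x → |φ (t + v) x j 0| ≤ C * (1 + x)) :
    |ieIntegrand r σ p f F φ t s i y v| ≤ C * (1 + s) * contractionIntegrand r f F s i y v := by
  have hsum : |∑ j, p i j * ∫ x in Set.Ioi 0, φ (t + v) x j 0 * lnKernel (r i) (σ i) x s v|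
      ≤ C * (1 + s * exp (r i * v)) :=
    abs_sum_mul_le_of_sum_eq_one hp0 hp1 fun j => abs_setIntegral_mul_lnKernel_le hσ hs hv (hbd j)
  have hweight : 0 ≤ exp (-(r i) * v) * (f i (y + v) / (1 - F i y)) :=
    mul_nonneg (exp_pos _).le hw
  calc |ieIntegrand r σ p f F φ t s i y v|
      = exp (-(r i) * v) * (f i (y + v) / (1 - F i y)) *
          |∑ j, p i j * ∫ x in Set.Ioi 0, φ (t + v) x j 0 * lnKernel (r i) (σ i) x s v| := by
        rw [ieIntegrand, abs_mul, abs_of_nonneg hweight]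
    _ ≤ exp (-(r i) * v) * (f i (y + v) / (1 - F i y)) * (C * (1 + s * exp (r i * v))) :=
        mul_le_mul_of_nonneg_left hsum hweight
    _ = C * (1 + s) * contractionIntegrand r f F s i y v := by
        rw [contractionIntegrand]
        field_simp

lemma aestronglyMeasurable_setIntegral_mul_lnKernel (hσ : 0 < σ i) (hs : 0 < s)
    (hφ : ContOnClosure T φ) (ht : 0 ≤ t) (j : Fin k) :
    AEStronglyMeasurable
      (fun v => ∫ x in Set.Ioi 0, φ (t + v) x j 0 * lnKernel (r i) (σ i) x s v)
      (volume.restrict (Set.Ioo 0 (T - t))) := by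
  refine AEStronglyMeasurable.integral_prod_right' (f := fun q : ℝ × ℝ =>
    φ (t + q.1) q.2 j 0 * lnKernel (r i) (σ i) q.2 s q.1) ?_
  rw [Measure.prod_restrict]
  refine ContinuousOn.aestronglyMeasurable (ContinuousOn.mul ?_ ?_)
    (measurableSet_Ioo.prod measurableSet_Ioi)
  · refine (hφ j).comp (f := fun q : ℝ × ℝ => (t + q.1, q.2, 0)) (by fun_prop) ?_
    rintro q ⟨⟨hv0, hvT⟩, hx : 0 < q.2⟩
    exact ⟨by linarith, by linarith, hx.le, le_rfl, by linarith⟩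
  · exact (continuousOn_lnKernel_uncurry hσ hs).mono (prod_mono Ioo_subset_Ioi_self le_rfl)

lemma integrableOn_contractionIntegrand (hf : ContinuousOn (f i) (Set.Ici 0)) (hy : 0 ≤ y) :
    IntegrableOn (contractionIntegrand r f F s i y) (Set.Ioo 0 (T - t)) := by
  refine (ContinuousOn.integrableOn_Icc ?_).mono_set Ioo_subset_Icc_self
  unfold contractionIntegrand
  fun_prop (disch := (rintro v ⟨hv, -⟩; exact add_nonneg hy hv))

lemma abs_ieIntegrand_le_of_linGrowthWith (hσ : 0 < σ i) (hp0 : ∀ j, 0 ≤ p i j)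
    (hp1 : ∑ j, p i j = 1) (hfnn : ∀ y, 0 ≤ y → 0 ≤ f i y) (hF1 : F i y < 1)
    (hφ : ContOnClosure T φ) (hC : LinGrowthWith T C φ) (hq : (t, s, y) ∈ domD T)
    (hv : v ∈ Set.Ioo 0 (T - t)) :
    |ieIntegrand r σ p f F φ t s i y v| ≤ C * (1 + s) * contractionIntegrand r f F s i y v := by
  obtain ⟨ht, -, hs, hy, -⟩ := hq
  refine abs_ieIntegrand_le hσ hp0 hp1 (div_nonneg (hfnn _ (by linarith [hv.1])) (by linarith))
    hs hv.1 fun j x hx => hφ.abs_slice_le hC (by linarith [hv.1]) (by linarith [hv.2]) hx j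

lemma aestronglyMeasurable_ieIntegrand (hσ : 0 < σ i) (hs : 0 < s) (hφ : ContOnClosure T φ)
    (ht : 0 ≤ t) (hf : ContinuousOn (f i) (Set.Ici 0)) (hy : 0 ≤ y) :
    AEStronglyMeasurable (ieIntegrand r σ p f F φ t s i y)
      (volume.restrict (Set.Ioo 0 (T - t))) := by
  have hw : ContinuousOn (fun v => f i (y + v) / (1 - F i y)) (Set.Ioo 0 (T - t)) :=
    ((hf.comp_const_add_Ici hy).mono fun _ hv => le_of_lt hv.1).div_const _
  exact .mul (.mul (by fun_prop) (hw.aestronglyMeasurable measurableSet_Ioo))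
    (Finset.aestronglyMeasurable_fun_sum _ fun j _ =>
      (aestronglyMeasurable_setIntegral_mul_lnKernel hσ hs hφ ht j).const_mul _)

lemma integrableOn_ieIntegrand (hσ : 0 < σ i) (hp0 : ∀ j, 0 ≤ p i j) (hp1 : ∑ j, p i j = 1)
    (hf : ContinuousOn (f i) (Set.Ici 0)) (hfnn : ∀ y, 0 ≤ y → 0 ≤ f i y) (hF1 : F i y < 1)
    (hφ : ContOnClosure T φ) (hC : LinGrowthWith T C φ) (hq : (t, s, y) ∈ domD T) :
    IntegrableOn (ieIntegrand r σ p f F φ t s i y) (Set.Ioo 0 (T - t)) := by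
  have hy : 0 ≤ y := hq.2.2.2.1.le
  exact ((integrableOn_contractionIntegrand hf hy).const_mul (C * (1 + s))).mono'
    (aestronglyMeasurable_ieIntegrand hσ hq.2.2.1 hφ hq.1.le hf hy)
    (ae_restrict_of_forall_mem measurableSet_Ioo fun _ hv =>
      abs_ieIntegrand_le_of_linGrowthWith hσ hp0 hp1 hfnn hF1 hφ hC hq hv)

lemma ieIntegrand_sub (hσ : 0 < σ i) (hφ₁ : ContOnClosure T φ₁) (hφ₂ : ContOnClosure T φ₂)
    (hC₁ : LinGrowthWith T C₁ φ₁) (hC₂ : LinGrowthWith T C₂ φ₂) (hq : (t, s, y) ∈ domD T)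
    (hv : v ∈ Set.Ioo 0 (T - t)) :
    ieIntegrand r σ p f F φ₁ t s i y v - ieIntegrand r σ p f F φ₂ t s i y v =
      ieIntegrand r σ p f F (fun t s i y => φ₁ t s i y - φ₂ t s i y) t s i y v := by
  obtain ⟨ht, -, hs, -, -⟩ := hq
  have ht' : 0 < t + v := by linarith [hv.1]
  have htT' : t + v < T := by linarith [hv.2]
  simp only [ieIntegrand, ← mul_sub, ← sum_sub_distrib]
  congr 1
  refine sum_congr rfl fun j _ => ?_
  rw [setIntegral_sub_mul_lnKernel hσ hs hv.1 (hφ₁.continuousOn_slice ht'.le htT'.le j)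
    (fun x hx => hφ₁.abs_slice_le hC₁ ht' htT' hx j)
    (hφ₂.continuousOn_slice ht'.le htT'.le j) (fun x hx => hφ₂.abs_slice_le hC₂ ht' htT' hx j),
    mul_sub]

lemma abs_ieRHS_sub_le (hσ : 0 < σ i) (hp0 : ∀ j, 0 ≤ p i j) (hp1 : ∑ j, p i j = 1)
    (hf : ContinuousOn (f i) (Set.Ici 0)) (hfnn : ∀ y, 0 ≤ y → 0 ≤ f i y) (hF1 : F i y < 1)
    (hφ₁ : ContOnClosure T φ₁) (hφ₂ : ContOnClosure T φ₂) (hg₁ : LinGrowth T φ₁)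
    (hg₂ : LinGrowth T φ₂) (hq : (t, s, y) ∈ domD T) :
    |ieRHS r σ p f F K T φ₁ t s i y - ieRHS r σ p f F K T φ₂ t s i y| ≤
      wnorm T (fun t s i y => φ₁ t s i y - φ₂ t s i y) * (1 + s) *
        ∫ v in Set.Ioo 0 (T - t), contractionIntegrand r f F s i y v := by
  have hN := (hg₁.sub hg₂).linGrowthWith_wnorm
  obtain ⟨C₁, hC₁⟩ := hg₁
  obtain ⟨C₂, hC₂⟩ := hg₂
  rw [ieRHS_sub_ieRHS,
    ← integral_sub (integrableOn_ieIntegrand hσ hp0 hp1 hf hfnn hF1 hφ₁ hC₁ hq)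
      (integrableOn_ieIntegrand hσ hp0 hp1 hf hfnn hF1 hφ₂ hC₂ hq),
    setIntegral_congr_fun measurableSet_Ioo fun v hv =>
      ieIntegrand_sub hσ hφ₁ hφ₂ hC₁ hC₂ hq hv,
    ← integral_const_mul, ← Real.norm_eq_abs]
  exact norm_integral_le_of_norm_le
    ((integrableOn_contractionIntegrand hf hq.2.2.2.1.le).const_mul _)
    (ae_restrict_of_forall_mem measurableSet_Ioo fun v hv =>
      abs_ieIntegrand_le_of_linGrowthWith hσ hp0 hp1 hfnn hF1 (hφ₁.sub hφ₂) hN hq hv)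

end Integrands

section ContractionConstant

variable {k : ℕ} {r : Fin k → ℝ} {f F : Fin k → ℝ → ℝ} {c : Fin k → ℝ}
  {T t s y v : ℝ} {i : Fin k}

lemma contractionIntegrand_nonneg (hs : 0 ≤ s) (hw : 0 ≤ f i (y + v) / (1 - F i y)) :
    0 ≤ contractionIntegrand r f F s i y v := by
  unfold contractionIntegrand
  positivity

lemma contractionIntegrand_le (hr : 0 ≤ r i) (hv : 0 ≤ v) (hs : 0 ≤ s)
    (hw : 0 ≤ f i (y + v) / (1 - F i y)) :
    contractionIntegrand r f F s i y v ≤ f i (y + v) / (1 - F i y) := by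
  have hdisc : exp (-(r i) * v) * (1 + s * exp (r i * v)) = exp (-(r i) * v) + s := by
    rw [mul_add, mul_one, mul_left_comm, ← exp_add, neg_mul, neg_add_cancel, exp_zero, mul_one]
  have hexp : exp (-(r i) * v) ≤ 1 := exp_le_one_iff.2 (by nlinarith)
  calc contractionIntegrand r f F s i y v
      = f i (y + v) / (1 - F i y) * ((exp (-(r i) * v) + s) / (1 + s)) := by
        rw [contractionIntegrand, ← hdisc]
        ring
    _ ≤ f i (y + v) / (1 - F i y) * 1 :=
        mul_le_mul_of_nonneg_left ((div_le_one (by positivity)).2 (by linarith)) hw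
    _ = f i (y + v) / (1 - F i y) := mul_one _

lemma setIntegral_contractionIntegrand_mem_Icc (hr : 0 ≤ r i)
    (hf : ContinuousOn (f i) (Set.Ici 0)) (hfnn : ∀ y, 0 ≤ y → 0 ≤ f i y)
    (hF : ∀ y, F i y = ∫ u in (0 : ℝ)..y, f i u) (hF1 : ∀ y, 0 ≤ y → F i y < 1)
    (hq : (t, s, y) ∈ domD T) :
    ∫ v in Set.Ioo 0 (T - t), contractionIntegrand r f F s i y v ∈ Set.Icc 0 (F i T) := by
  obtain ⟨ht, htT, hs, hy, hyt⟩ := hq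
  have h1F : 0 < 1 - F i y := by linarith [hF1 y hy.le]
  have hw : ∀ v ∈ Set.Ioo 0 (T - t), 0 ≤ f i (y + v) / (1 - F i y) := fun v hv =>
    div_nonneg (hfnn _ (by linarith [hv.1])) h1F.le
  have hmono := monotoneOn_of_eq_integral hf hfnn hF
  have hF0 : F i 0 = 0 := by simp [hF]
  refine ⟨setIntegral_nonneg measurableSet_Ioo fun v hv =>
    contractionIntegrand_nonneg hs.le (hw v hv), ?_⟩
  calc ∫ v in Set.Ioo 0 (T - t), contractionIntegrand r f F s i y v
      ≤ ∫ v in Set.Ioo 0 (T - t), f i (y + v) / (1 - F i y) :=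
        setIntegral_mono_on (integrableOn_contractionIntegrand hf hy.le)
          ((((hf.comp_const_add_Ici hy.le).mono Icc_subset_Ici_self).integrableOn_Icc.mono_set
            Ioo_subset_Icc_self).div_const _) measurableSet_Ioo
          fun v hv => contractionIntegrand_le hr hv.1.le hs.le (hw v hv)
    _ = (F i (y + (T - t)) - F i y) / (1 - F i y) := by
        rw [integral_div, setIntegral_Ioo_comp_const_add hf hF hy.le (by linarith)]
    _ ≤ F i T := by
        have hFT : F i (y + (T - t)) ≤ F i T :=
          hmono (show 0 ≤ y + (T - t) by linarith) (show 0 ≤ T by linarith) (by linarith)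
        have hFy : 0 ≤ F i y := hF0 ▸ hmono (le_refl (0 : ℝ)) hy.le hy.le
        rw [div_le_iff₀ h1F]
        nlinarith [hF1 T (by linarith)]

lemma Lconst_nonneg
    (h : ∀ t s y i, (t, s, y) ∈ domD T →
      ∫ v in Set.Ioo 0 (T - t), contractionIntegrand r f F s i y v ∈ Set.Icc 0 (c i)) :
    0 ≤ Lconst r f F T :=
  Real.sSup_nonneg <| by
    rintro _ ⟨t, s, y, i, hq, rfl⟩
    exact (h t s y i hq).1

lemma Lconst_lt_one (hc : ∀ i, c i < 1)
    (h : ∀ t s y i, (t, s, y) ∈ domD T →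
      ∫ v in Set.Ioo 0 (T - t), contractionIntegrand r f F s i y v ∈ Set.Icc 0 (c i)) :
    Lconst r f F T < 1 := by
  obtain ⟨c', hc', hcc'⟩ := exists_lt_forall_le_of_forall_lt hc
  refine (Real.sSup_le ?_ (le_max_right c' 0)).trans_lt (max_lt hc' one_pos)
  rintro _ ⟨t, s, y, i, hq, rfl⟩
  exact (h t s y i hq).2.trans ((hcc' i).trans (le_max_left _ _))

lemma setIntegral_contractionIntegrand_le_Lconst (hc : ∀ i, c i < 1)
    (h : ∀ t s y i, (t, s, y) ∈ domD T →
      ∫ v in Set.Ioo 0 (T - t), contractionIntegrand r f F s i y v ∈ Set.Icc 0 (c i))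
    (hq : (t, s, y) ∈ domD T) :
    ∫ v in Set.Ioo 0 (T - t), contractionIntegrand r f F s i y v ≤ Lconst r f F T := by
  refine le_csSup ⟨1, ?_⟩ ⟨t, s, y, i, hq, rfl⟩
  rintro _ ⟨t, s, y, i, hq, rfl⟩
  exact (h t s y i hq).2.trans (hc i).le

end ContractionConstant

theorem operator_A_contraction_general
    (k : ℕ) (T K : ℝ) (hT : 0 < T)
    (r σ : Fin k → ℝ) (hr : ∀ i, 0 ≤ r i) (hσ : ∀ i, 0 < σ i)
    (p : Fin k → Fin k → ℝ) (hp0 : ∀ i j, 0 ≤ p i j)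
    (hp1 : ∀ i, ∑ j, p i j = 1)
    (f : Fin k → ℝ → ℝ)
    (hfC1 : ∀ i, ContDiffOn ℝ 1 (f i) (Set.Ici 0))
    (hfnn : ∀ i y, 0 ≤ y → 0 ≤ f i y)
    (F : Fin k → ℝ → ℝ) (hFdef : ∀ i y, F i y = ∫ u in (0 : ℝ)..y, f i u)
    (hFlt : ∀ i y, 0 ≤ y → F i y < 1) :
    0 ≤ Lconst r f F T ∧ Lconst r f F T < 1 ∧
    ∀ φ₁ φ₂ : ℝ → ℝ → Fin k → ℝ → ℝ, memB T φ₁ → memB T φ₂ →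
      wnorm T (fun t s i y =>
          ieRHS r σ p f F K T φ₁ t s i y - ieRHS r σ p f F K T φ₂ t s i y)
        ≤ Lconst r f F T * wnorm T (fun t s i y => φ₁ t s i y - φ₂ t s i y) := by
  have hfc : ∀ i, ContinuousOn (f i) (Set.Ici 0) := fun i => (hfC1 i).continuousOn
  have hFT : ∀ i, F i T < 1 := fun i => hFlt i T hT.le
  have hmem : ∀ t s y i, (t, s, y) ∈ domD T →
      ∫ v in Set.Ioo 0 (T - t), contractionIntegrand r f F s i y v ∈ Set.Icc 0 (F i T) :=
    fun t s y i hq =>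
      setIntegral_contractionIntegrand_mem_Icc (hr i) (hfc i) (hfnn i) (hFdef i) (hFlt i) hq
  have hL0 : 0 ≤ Lconst r f F T := Lconst_nonneg hmem
  refine ⟨hL0, Lconst_lt_one hFT hmem, ?_⟩
  rintro φ₁ φ₂ ⟨hφ₁, -, -, hg₁⟩ ⟨hφ₂, -, -, hg₂⟩
  refine wnorm_le (mul_nonneg hL0 wnorm_nonneg) fun t s y hq i => ?_
  have h1s : 0 ≤ 1 + s := by linarith [hq.2.2.1]
  calc |ieRHS r σ p f F K T φ₁ t s i y - ieRHS r σ p f F K T φ₂ t s i y|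
      ≤ wnorm T (fun t s i y => φ₁ t s i y - φ₂ t s i y) * (1 + s) *
          ∫ v in Set.Ioo 0 (T - t), contractionIntegrand r f F s i y v :=
        abs_ieRHS_sub_le (hσ i) (hp0 i) (hp1 i) (hfc i) (hfnn i) (hFlt i y hq.2.2.2.1.le)
          hφ₁ hφ₂ hg₁ hg₂ hq
    _ ≤ wnorm T (fun t s i y => φ₁ t s i y - φ₂ t s i y) * (1 + s) * Lconst r f F T :=
        mul_le_mul_of_nonneg_left (setIntegral_contractionIntegrand_le_Lconst hFT hmem hq)
          (mul_nonneg wnorm_nonneg h1s)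
    _ = Lconst r f F T * wnorm T (fun t s i y => φ₁ t s i y - φ₂ t s i y) * (1 + s) := by ring

/-- The integral operator `A` is a contraction on `B` for the weighted sup norm,
with contraction constant `L = sup_D ∫₀^{T-t} e^{-r(i)v} (f(y+v|i)/(1-F(y|i)))
(1+s e^{r(i)v})/(1+s) dv < 1`. -/
theorem operator_A_contraction
    (k : ℕ) (hk : 1 ≤ k) (T K : ℝ) (hT : 0 < T) (hK : 0 < K)
    (r σ : Fin k → ℝ) (hr : ∀ i, 0 ≤ r i) (hσ : ∀ i, 0 < σ i)
    (p : Fin k → Fin k → ℝ) (hp0 : ∀ i j, 0 ≤ p i j)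
    (hp1 : ∀ i, ∑ j, p i j = 1) (hpd : ∀ i, p i i = 0)
    (f : Fin k → ℝ → ℝ)
    (hfC1 : ∀ i, ContDiffOn ℝ 1 (f i) (Set.Ici 0))
    (hfbd : ∀ i, ∃ M : ℝ, ∀ y, 0 ≤ y → f i y ≤ M)
    (hfpos : ∀ i y, 0 < y → 0 < f i y)
    (hfnn : ∀ i y, 0 ≤ y → 0 ≤ f i y)
    (hfdens : ∀ i, ∫ u in Set.Ioi (0 : ℝ), f i u = 1)
    (F : Fin k → ℝ → ℝ) (hFdef : ∀ i y, F i y = ∫ u in (0 : ℝ)..y, f i u)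
    (hFlt : ∀ i y, 0 ≤ y → F i y < 1) :
    0 ≤ Lconst r f F T ∧ Lconst r f F T < 1 ∧
    ∀ φ₁ φ₂ : ℝ → ℝ → Fin k → ℝ → ℝ, memB T φ₁ → memB T φ₂ →
      wnorm T (fun t s i y =>
          ieRHS r σ p f F K T φ₁ t s i y - ieRHS r σ p f F K T φ₂ t s i y)
        ≤ Lconst r f F T * wnorm T (fun t s i y => φ₁ t s i y - φ₂ t s i y) :=
  operator_A_contraction_general k T K hT r σ hr hσ p hp0 hp1 f hfC1 hfnn F hFdef hFlt
end

section
/- For every r ≥ 0, σ > 0, K > 0 and T > 0, the Black–Scholes price function η(t,s) = s Φ(d₁(t,s)) − K e^{−r(T−t)} Φ(d₂(t,s)) satisfies the Black–Scholes partial differential equation ∂η/∂t (t,s) + r s ∂η/∂s (t,s) + ½ σ² s² ∂²η/∂s² (t,s) = r η(t,s) at every point (t,s) with 0 < t < T and s > 0. -/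
/-!
Write `τ = T - t` for the time to maturity, so that `η = s Φ(d₁) - K e^{-rτ} Φ(d₂)` with
`d₂ = d₁ - σ√τ`. Completing the square in the Gaussian density `φ = Φ'` gives
`s φ(d₁) = K e^{-rτ} φ(d₂)`, and with this identity every term containing a derivative of `d₁`
cancels. Hence `∂η/∂s = Φ(d₁)`, `∂²η/∂s² = φ(d₁) / (s σ √τ)` and
`∂η/∂t = -s φ(d₁) σ / (2√τ) - r K e^{-rτ} Φ(d₂)`, and the PDE becomes an identity.
-/

open MeasureTheory Real

open Set Filter

theorem hasDerivAt_integral_Iic {f : ℝ → ℝ} (hf : Integrable f) (hc : Continuous f) (x : ℝ) :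
    HasDerivAt (fun y => ∫ u in Iic y, f u) (f x) x := by
  have hsplit :
      (fun y => ∫ u in Iic y, f u) = fun y => (∫ u in Iic 0, f u) + ∫ u in 0..y, f u := by
    funext y
    rw [← intervalIntegral.integral_Iic_sub_Iic hf.integrableOn hf.integrableOn]
    ring
  rw [hsplit]
  exact (intervalIntegral.integral_hasDerivAt_right hf.intervalIntegrable
    hc.aestronglyMeasurable.stronglyMeasurableAtFilter hc.continuousAt).const_add _

noncomputable def stdNormalPDF (x : ℝ) : ℝ :=
  exp (-x ^ 2 / 2) / sqrt (2 * π)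

theorem integrable_stdNormalPDF : Integrable stdNormalPDF := by
  convert (integrable_exp_neg_mul_sq (b := 1 / 2) (by norm_num)).div_const (sqrt (2 * π))
    using 2 with u
  simp only [stdNormalPDF]
  ring_nf

theorem hasDerivAt_stdNormalCDF (x : ℝ) : HasDerivAt stdNormalCDF (stdNormalPDF x) x :=
  hasDerivAt_integral_Iic integrable_stdNormalPDF (by unfold stdNormalPDF; fun_prop) x

section BlackScholes

variable (r σ K : ℝ)

noncomputable def bsD1 (τ s : ℝ) : ℝ :=
  (log (s / K) + (r + σ ^ 2 / 2) * τ) / (σ * sqrt τ)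

noncomputable def bsD2 (τ s : ℝ) : ℝ :=
  bsD1 r σ K τ s - σ * sqrt τ

noncomputable def bsCall (τ s : ℝ) : ℝ :=
  s * stdNormalCDF (bsD1 r σ K τ s) - K * exp (-r * τ) * stdNormalCDF (bsD2 r σ K τ s)

theorem bsPrice_eq_bsCall {T t s : ℝ} (htT : t < T) (hs : 0 < s) :
    bsPrice r σ K T t s = bsCall r σ K (T - t) s := by
  rw [bsPrice, if_neg hs.not_ge, if_pos htT, bsCall, bsD2, bsD1]

variable {r σ K}

theorem spot_mul_stdNormalPDF_bsD1 {τ s : ℝ} (hσ : σ ≠ 0) (hK : 0 < K) (hτ : 0 < τ) (hs : 0 < s) :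
    s * stdNormalPDF (bsD1 r σ K τ s) = K * exp (-r * τ) * stdNormalPDF (bsD2 r σ K τ s) := by
  have hq : sqrt τ ≠ 0 := (sqrt_pos.mpr hτ).ne'
  have hd1 : bsD1 r σ K τ s * (σ * sqrt τ) = log s - log K + (r + σ ^ 2 / 2) * τ := by
    rw [bsD1, div_mul_cancel₀ _ (mul_ne_zero hσ hq), log_div hs.ne' hK.ne']
  rw [stdNormalPDF, stdNormalPDF, bsD2, mul_div_assoc', mul_div_assoc']
  generalize bsD1 r σ K τ s = d at hd1 ⊢
  congr 1
  rw [← exp_log hs, ← exp_log hK, ← exp_add, ← exp_add, ← exp_add, exp_eq_exp]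
  linear_combination (-1 : ℝ) * hd1 + σ ^ 2 / 2 * sq_sqrt hτ.le

theorem hasDerivAt_bsD1_spot {τ s : ℝ} (hσ : σ ≠ 0) (hK : 0 < K) (hτ : 0 < τ) (hs : 0 < s) :
    HasDerivAt (bsD1 r σ K τ) (1 / (s * (σ * sqrt τ))) s := by
  have hq : sqrt τ ≠ 0 := (sqrt_pos.mpr hτ).ne'
  have h := ((((hasDerivAt_id s).div_const K).log (div_pos hs hK).ne').add_const
    ((r + σ ^ 2 / 2) * τ)).div_const (σ * sqrt τ)
  refine h.congr_deriv ?_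
  simp only [id_eq]
  field_simp

theorem differentiableAt_bsD1_maturity {τ : ℝ} (s : ℝ) (hσ : σ ≠ 0) (hτ : 0 < τ) :
    DifferentiableAt ℝ (fun τ => bsD1 r σ K τ s) τ :=
  (((hasDerivAt_id τ).const_mul (r + σ ^ 2 / 2)).const_add (log (s / K)) |>.div
    ((hasDerivAt_sqrt hτ.ne').const_mul σ) (mul_ne_zero hσ (sqrt_pos.mpr hτ).ne')).differentiableAt

theorem hasDerivAt_bsCall_spot {τ s : ℝ} (hσ : σ ≠ 0) (hK : 0 < K) (hτ : 0 < τ) (hs : 0 < s) :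
    HasDerivAt (bsCall r σ K τ) (stdNormalCDF (bsD1 r σ K τ s)) s := by
  have hd1 := hasDerivAt_bsD1_spot (r := r) hσ hK hτ hs
  have h := ((hasDerivAt_id s).mul ((hasDerivAt_stdNormalCDF _).comp s hd1)).sub
    (((hasDerivAt_stdNormalCDF _).comp s (hd1.sub_const (σ * sqrt τ))).const_mul
      (K * exp (-r * τ)))
  refine h.congr_deriv ?_
  have key := spot_mul_stdNormalPDF_bsD1 (r := r) hσ hK hτ hs
  rw [bsD2] at key
  simp only [id_eq, Function.comp_apply]
  linear_combination (1 / (s * (σ * sqrt τ))) * key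

theorem hasDerivAt_stdNormalCDF_bsD1_spot {τ s : ℝ} (hσ : σ ≠ 0) (hK : 0 < K) (hτ : 0 < τ)
    (hs : 0 < s) :
    HasDerivAt (fun s => stdNormalCDF (bsD1 r σ K τ s))
      (stdNormalPDF (bsD1 r σ K τ s) * (1 / (s * (σ * sqrt τ)))) s :=
  (hasDerivAt_stdNormalCDF _).comp s (hasDerivAt_bsD1_spot hσ hK hτ hs)

theorem hasDerivAt_bsCall_maturity {τ s : ℝ} (hσ : σ ≠ 0) (hK : 0 < K) (hτ : 0 < τ)
    (hs : 0 < s) :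
    HasDerivAt (fun τ => bsCall r σ K τ s)
      (s * stdNormalPDF (bsD1 r σ K τ s) * σ / (2 * sqrt τ)
        + r * (K * exp (-r * τ)) * stdNormalCDF (bsD2 r σ K τ s)) τ := by
  have hd1 := (differentiableAt_bsD1_maturity (r := r) (K := K) s hσ hτ).hasDerivAt
  have hd2 := hd1.sub ((hasDerivAt_sqrt hτ.ne').const_mul σ)
  have h := (((hasDerivAt_stdNormalCDF _).comp τ hd1).const_mul s).sub
    ((((hasDerivAt_id τ).const_mul (-r)).exp.const_mul K).mul
      ((hasDerivAt_stdNormalCDF _).comp τ hd2))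
  refine h.congr_deriv ?_
  have key := spot_mul_stdNormalPDF_bsD1 (r := r) hσ hK hτ hs
  rw [bsD2] at key
  simp only [id_eq, Function.comp_apply, Pi.sub_apply, bsD2]
  linear_combination (deriv (fun τ => bsD1 r σ K τ s) τ - σ / (2 * sqrt τ)) * key

end BlackScholes

theorem black_scholes_pde_general (r σ K T : ℝ) (hσ : 0 < σ) (hK : 0 < K)
    (t s : ℝ) (htT : t < T) (hs : 0 < s) :
    ∃ a b c : ℝ,
      HasDerivAt (fun τ => bsPrice r σ K T τ s) a t ∧
      HasDerivAt (fun w => bsPrice r σ K T t w) b s ∧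
      HasDerivAt (deriv (fun w => bsPrice r σ K T t w)) c s ∧
      a + r * s * b + (1 / 2) * σ ^ 2 * s ^ 2 * c = r * bsPrice r σ K T t s := by
  have hτ : 0 < T - t := sub_pos.mpr htT
  have hdelta {w : ℝ} (hw : 0 < w) :
      HasDerivAt (fun w => bsPrice r σ K T t w) (stdNormalCDF (bsD1 r σ K (T - t) w)) w :=
    (hasDerivAt_bsCall_spot hσ.ne' hK hτ hw).congr_of_eventuallyEq <|
      eventually_of_mem (Ioi_mem_nhds hw) fun v hv => bsPrice_eq_bsCall r σ K htT hv
  have hgamma := (hasDerivAt_stdNormalCDF_bsD1_spot hσ.ne' hK hτ hs).congr_of_eventuallyEq <|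
    eventually_of_mem (Ioi_mem_nhds hs) fun w hw => (hdelta hw).deriv
  have htheta := ((hasDerivAt_bsCall_maturity hσ.ne' hK hτ hs).comp t
    ((hasDerivAt_id t).const_sub T)).congr_of_eventuallyEq <|
      eventually_of_mem (Iio_mem_nhds htT) fun u hu => bsPrice_eq_bsCall r σ K hu hs
  refine ⟨_, _, _, htheta, hdelta hs, hgamma, ?_⟩
  have hq : sqrt (T - t) ≠ 0 := (sqrt_pos.mpr hτ).ne'
  rw [bsPrice_eq_bsCall r σ K htT hs, bsCall]
  field_simp
  ring

/-- The Black–Scholes price satisfies the Black–Scholes PDE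
`∂η/∂t + r s ∂η/∂s + ½σ²s²∂²η/∂s² = r η` on `(0,T) × (0,∞)`. -/
theorem black_scholes_pde (r σ K T : ℝ) (hr : 0 ≤ r) (hσ : 0 < σ) (hK : 0 < K) (hT : 0 < T)
    (t s : ℝ) (ht0 : 0 < t) (htT : t < T) (hs : 0 < s) :
    ∃ a b c : ℝ,
      HasDerivAt (fun τ => bsPrice r σ K T τ s) a t ∧
      HasDerivAt (fun w => bsPrice r σ K T t w) b s ∧
      HasDerivAt (deriv (fun w => bsPrice r σ K T t w)) c s ∧
      a + r * s * b + (1 / 2) * σ ^ 2 * s ^ 2 * c = r * bsPrice r σ K T t s :=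
  black_scholes_pde_general r σ K T hσ hK t s htT hs
end

section
/- Let T > 0, a > 0 and let Δt > 0 satisfy Δt ≤ e^{−aT}/a. Set N = ⌊T/Δt⌋ and assume N ≥ 1. Then for every integer n with 0 ≤ n ≤ N−1 one has a·Δt·(1 + a·Δt)^{N−n−1} < 1; that is, the effect ε_n = a·Δt·(1 + a·Δt)^{N−n−1}·δ_n of an isolated perturbation δ_n > 0 introduced at step n satisfies ε_n < δ_n, so the step-by-step quadrature scheme is strictly stable with respect to isolated perturbations. -/
/-- Strict stability of the step-by-step quadrature scheme with respect to an
isolated perturbation: if `Δt ≤ e^{−aT}/a` then the propagated effect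
`a·Δt·(1+a·Δt)^{N−n−1}·δ_n` of an isolated perturbation `δ_n` is `< δ_n`. -/
theorem quadrature_strict_stability (T a Δt : ℝ) (hT : 0 < T) (ha : 0 < a) (hΔ : 0 < Δt)
    (hle : Δt ≤ Real.exp (-a * T) / a)
    (N : ℕ) (hN : N = ⌊T / Δt⌋₊) (hN1 : 1 ≤ N) :
    ∀ n : ℕ, n ≤ N - 1 →
      a * Δt * (1 + a * Δt) ^ (N - n - 1) < 1 ∧
      ∀ δ : ℝ, 0 < δ → a * Δt * (1 + a * Δt) ^ (N - n - 1) * δ < δ := by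
  intro n hn
  set k := N - n - 1 with hk
  have hkN : (k : ℝ) ≤ (N : ℝ) - 1 := by
    have : k ≤ N - 1 := by omega
    have h2 : (k : ℝ) ≤ ((N - 1 : ℕ) : ℝ) := by exact_mod_cast this
    calc (k : ℝ) ≤ ((N - 1 : ℕ) : ℝ) := h2
      _ ≤ (N : ℝ) - 1 := by
        have : ((N - 1 : ℕ) : ℝ) = (N : ℝ) - 1 := by
          have := Nat.cast_sub hN1 (R := ℝ)
          simpa using this
        rw [this]
  -- Δt * N ≤ T
  have hNT : Δt * (N : ℝ) ≤ T := by
    have hfl : (N : ℝ) ≤ T / Δt := by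
      rw [hN]; exact Nat.floor_le (by positivity)
    calc Δt * (N : ℝ) ≤ Δt * (T / Δt) := by nlinarith
      _ = T := by field_simp
  have haΔ : a * Δt ≤ Real.exp (-a * T) := by
    calc a * Δt ≤ a * (Real.exp (-a * T) / a) := by nlinarith
      _ = Real.exp (-a * T) := by field_simp
  have hpos : (0:ℝ) < 1 + a * Δt := by nlinarith
  have hexp : (1 + a * Δt) ^ k ≤ Real.exp (a * Δt * k) := by
    calc (1 + a * Δt) ^ k ≤ (Real.exp (a * Δt)) ^ k := by
          apply pow_le_pow_left₀ (le_of_lt hpos)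
          linarith [Real.add_one_le_exp (a * Δt)]
      _ = Real.exp (a * Δt * k) := by rw [← Real.exp_nat_mul]; ring_nf
  have hlt : a * Δt * (1 + a * Δt) ^ k < 1 := by
    have h1 : a * Δt * (1 + a * Δt) ^ k ≤ Real.exp (-a * T) * Real.exp (a * Δt * k) := by
      apply mul_le_mul haΔ hexp (by positivity) (by positivity)
    have h2 : Real.exp (-a * T) * Real.exp (a * Δt * k) = Real.exp (a * Δt * k - a * T) := by
      rw [← Real.exp_add]; ring_nf
    have h3 : a * Δt * k - a * T < 0 := by
      have : Δt * k ≤ Δt * ((N : ℝ) - 1) := by nlinarith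
      nlinarith
    have h4 : Real.exp (a * Δt * k - a * T) < 1 := Real.exp_lt_one_iff.mpr h3
    linarith [h1, h2 ▸ h1]
  exact ⟨hlt, fun δ hδ => by nlinarith [pow_pos hpos k]⟩
end
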